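/- Let m ≥ 3 and let λ_1,…,λ_m ∈ ℤ² be such that each λ_i is primitive and det(λ_i,λ_{i+1}) ≠ 0 for i = 1,…,m (indices mod m). Let L = L_1 ∩ ⋯ ∩ L_m. Then L has finite index in ℤ^m, and for every ℤ-basis κ_1,…,κ_{m−2} of K, the index equals [ℤ^m : L] = |det M| where M is the m×m integer matrix whose columns are a, b, φ(κ_1),…,φ(κ_{m−2}); in particular this determinant is nonzero. -/

import Mathlib

/-!
Membership in `L_i` only constrains the pair `(x_i, x_{i+1})`, which must lie in the span of
`(a_i, a_{i+1})` and `(b_i, b_{i+1})`. By Cramer's rule `det(λ_i, λ_{i+1}) • ℤ^m ⊆ L_i`, so `L` has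
finite index. Conversely, for `x ∈ L` the representations of `x_k` coming from `L_{k-1}` and `L_k`
differ by `t_k (b_k, -a_k)`, since `λ_k` is primitive; going once around the cycle forces `t ∈ K`,
and then `x = u a + w b + φ t`. Hence `L = ℤ a + ℤ b + φ(K)` is the column span of `M`, and the
index of the column span of a square integer matrix is `|det M|` (Smith normal form).
-/

namespace ToricStmt

/-- Cyclic successor on `Fin m` (indices mod `m`). -/
def fsucc {m : ℕ} (i : Fin m) : Fin m := ⟨(i.val + 1) % m, Nat.mod_lt _ i.pos⟩

/-- The submodule `K` of linear relations among the `λ_i = (a_i, b_i)`. -/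
def Kmod (m : ℕ) (a b : Fin m → ℤ) : Submodule ℤ (Fin m → ℤ) where
  carrier := {t | ∑ i, t i * a i = 0 ∧ ∑ i, t i * b i = 0}
  add_mem' := by
    intro x y hx hy
    obtain ⟨hx1, hx2⟩ := hx
    obtain ⟨hy1, hy2⟩ := hy
    constructor
    · simp only [Pi.add_apply, add_mul]
      rw [Finset.sum_add_distrib, hx1, hy1, add_zero]
    · simp only [Pi.add_apply, add_mul]
      rw [Finset.sum_add_distrib, hx2, hy2, add_zero]
  zero_mem' := by constructor <;> simp
  smul_mem' := by
    intro c x hx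
    obtain ⟨hx1, hx2⟩ := hx
    constructor
    · simp only [Pi.smul_apply, smul_eq_mul, mul_assoc]
      rw [← Finset.mul_sum, hx1, mul_zero]
    · simp only [Pi.smul_apply, smul_eq_mul, mul_assoc]
      rw [← Finset.mul_sum, hx2, mul_zero]

/-- The linear map `φ : ℤ^m → ℤ^m`, with `(φ t)_i = ∑_{j<i} (a_j b_i - a_i b_j) t_j`. -/
def phi (m : ℕ) (a b : Fin m → ℤ) : (Fin m → ℤ) →ₗ[ℤ] (Fin m → ℤ) where
  toFun t := fun i => ∑ j ∈ Finset.univ.filter (fun j => j < i), (a j * b i - a i * b j) * t j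
  map_add' x y := by
    funext i
    simp only [Pi.add_apply, mul_add]
    exact Finset.sum_add_distrib
  map_smul' c x := by
    funext i
    simp only [Pi.smul_apply, smul_eq_mul, RingHom.id_apply]
    rw [Finset.mul_sum]
    exact Finset.sum_congr rfl fun j _ => by ring

/-- The lattice `L_i`: the span of the `e_j` for `j ∉ {i, i+1}` together with
`a_i e_i + a_{i+1} e_{i+1}` and `b_i e_i + b_{i+1} e_{i+1}` (indices mod `m`). -/
def Lmod (m : ℕ) (a b : Fin m → ℤ) (i : Fin m) : Submodule ℤ (Fin m → ℤ) :=
  Submodule.span ℤ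
    ((fun j : Fin m => (Pi.single j 1 : Fin m → ℤ)) '' {j : Fin m | j ≠ i ∧ j ≠ fsucc i} ∪
      {a i • (Pi.single i 1 : Fin m → ℤ) + a (fsucc i) • (Pi.single (fsucc i) 1 : Fin m → ℤ),
       b i • (Pi.single i 1 : Fin m → ℤ) + b (fsucc i) • (Pi.single (fsucc i) 1 : Fin m → ℤ)})

end ToricStmt

lemma Int.exists_eq_mul_of_gcd_eq_one {A B X Y : ℤ} (h : Int.gcd A B = 1)
    (hXY : A * X + B * Y = 0) : ∃ s, X = B * s ∧ Y = -(A * s) := by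
  have hb : (1 : ℤ) = A * Int.gcdA A B + B * Int.gcdB A B := by
    rw [← Int.gcd_eq_gcd_ab, h, Nat.cast_one]
  exact ⟨Int.gcdB A B * X - Int.gcdA A B * Y,
    by linear_combination X * hb + Int.gcdA A B * hXY,
    by linear_combination Y * hb + Int.gcdB A B * hXY⟩

theorem Matrix.index_range_mulVecLin {ι : Type*} [Fintype ι] [DecidableEq ι]
    (M : Matrix ι ι ℤ) :
    (LinearMap.range M.mulVecLin).toAddSubgroup.index = M.det.natAbs := by
  by_cases hinj : Function.Injective M.mulVecLin
  · rw [← LinearMap.det_toLin', Matrix.toLin'_apply']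
    exact (Submodule.natAbs_det_equiv _ (LinearEquiv.ofInjective M.mulVecLin hinj)).symm
  · have hdet : M.det = 0 := by
      rw [injective_iff_map_eq_zero] at hinj
      push Not at hinj
      obtain ⟨v, hv, hv0⟩ := hinj
      exact Matrix.exists_mulVec_eq_zero_iff.mp ⟨v, hv0, hv⟩
    rw [hdet, Int.natAbs_zero]
    by_contra hidx
    obtain ⟨e⟩ := Int.submodule_toAddSubgroup_index_ne_zero_iff.mp hidx
    have hsurj : Function.Surjective (e.toLinearMap ∘ₗ M.mulVecLin.rangeRestrict) :=
      e.surjective.comp M.mulVecLin.surjective_rangeRestrict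
    have := OrzechProperty.injective_of_surjective_endomorphism _ hsurj
    rw [LinearMap.coe_comp] at this
    exact hinj (M.mulVecLin.injective_rangeRestrict_iff.mp this.of_comp)

lemma Int.submodule_toAddSubgroup_index_ne_zero_of_smul_mem {ι : Type*} [Fintype ι]
    [DecidableEq ι] {N : Submodule ℤ (ι → ℤ)} {D : ℤ} (hD : D ≠ 0) (h : ∀ x, D • x ∈ N) :
    N.toAddSubgroup.index ≠ 0 := by
  let Δ : Matrix ι ι ℤ := Matrix.diagonal fun _ => D
  have hle : LinearMap.range Δ.mulVecLin ≤ N := by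
    rintro _ ⟨x, rfl⟩
    convert h x using 1
    ext i
    simp [Δ, Matrix.mulVec_diagonal]
  refine ne_zero_of_dvd_ne_zero ?_
    (AddSubgroup.index_dvd_of_le (Submodule.toAddSubgroup_mono hle))
  rw [Matrix.index_range_mulVecLin]
  simp [Δ, hD]

namespace ToricStmt

section

open Finset

variable {m : ℕ}

lemma fsucc_ne_self (hm : 2 ≤ m) (i : Fin m) : fsucc i ≠ i := by
  intro h
  have h' : (i.val + 1) % m = i.val := congrArg Fin.val h
  rcases Nat.lt_or_ge (i.val + 1) m with h1 | h1
  · rw [Nat.mod_eq_of_lt h1] at h'; omega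
  · rw [show i.val + 1 = m by omega, Nat.mod_self] at h'; omega

lemma fsucc_eq_finRotate (i : Fin m) : fsucc i = finRotate m i := by
  have : NeZero m := ⟨i.pos.ne'⟩
  rw [finRotate_apply]
  ext
  simp [fsucc, Fin.val_add]

lemma eq_of_forall_fsucc_eq {α : Type*} {f : Fin m → α} (h : ∀ k, f (fsucc k) = f k)
    (i j : Fin m) : f i = f j := by
  suffices hf : ∀ (k : ℕ) (hk : k < m), f ⟨k, hk⟩ = f ⟨0, by omega⟩ by
    rw [hf i i.isLt, hf j j.isLt]
  intro k
  induction k with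
  | zero => exact fun _ => rfl
  | succ k ih =>
    intro hk
    rw [← ih (by omega), ← h ⟨k, by omega⟩]
    exact congrArg f (Fin.ext (Nat.mod_eq_of_lt hk).symm)

lemma sum_Iio_fsucc {f : Fin m → ℤ} (hf : ∑ j, f j = 0) (i : Fin m) :
    ∑ j ∈ Iio (fsucc i), f j = ∑ j ∈ Iio i, f j + f i := by
  rw [add_comm, add_sum_Iio_eq_sum_Iic]
  rcases Nat.lt_or_ge (i.val + 1) m with h | h
  · congr 1
    ext j
    simp only [mem_Iio, mem_Iic, Fin.lt_def, Fin.le_def, fsucc, Nat.mod_eq_of_lt h]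
    omega
  · have hIic : Iic i = univ := by
      ext j; simp only [mem_Iic, mem_univ, iff_true, Fin.le_def]; omega
    have hIio : Iio (fsucc i) = ∅ := by
      ext j
      simp only [mem_Iio, Fin.lt_def, fsucc, show i.val + 1 = m by omega, Nat.mod_self]
      simp
    rw [hIic, hIio, sum_empty, hf]

variable (a b : Fin m → ℤ)

lemma mem_Lmod_of_eq_zero (i : Fin m) {x : Fin m → ℤ} (hi : x i = 0) (hs : x (fsucc i) = 0) :
    x ∈ Lmod m a b i := by
  rw [pi_eq_sum_univ' x]
  refine Submodule.sum_mem _ fun j _ => ?_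
  by_cases hj : j = i ∨ j = fsucc i
  · rcases hj with rfl | rfl <;> simp [hi, hs]
  · push Not at hj
    exact Submodule.smul_mem _ _ (Submodule.subset_span (Or.inl ⟨j, hj, rfl⟩))

lemma mem_Lmod_iff (hm : 2 ≤ m) (i : Fin m) {x : Fin m → ℤ} :
    x ∈ Lmod m a b i ↔ ∃ u w : ℤ, x i = u * a i + w * b i ∧
      x (fsucc i) = u * a (fsucc i) + w * b (fsucc i) := by
  have hne := fsucc_ne_self hm i
  let π : (Fin m → ℤ) →ₗ[ℤ] ℤ × ℤ := (LinearMap.proj i).prod (LinearMap.proj (fsucc i))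
  have hπ : Lmod m a b i ≤
      (Submodule.span ℤ {(a i, a (fsucc i)), (b i, b (fsucc i))}).comap π := by
    rw [Lmod, Submodule.span_le]
    rintro _ (⟨j, ⟨hji, hjs⟩, rfl⟩ | hy | hy)
    · simp [π, hji.symm, hjs.symm, Prod.mk_zero_zero]
    · exact Submodule.subset_span (by simp [π, hy, hne, hne.symm])
    · exact Submodule.subset_span (by simp_all [π, hne.symm])
  constructor
  · intro hx
    obtain ⟨u, w, huw⟩ := Submodule.mem_span_pair.mp (hπ hx)
    simp only [π, Prod.ext_iff] at huw
    exact ⟨u, w, by simpa [eq_comm] using huw.1, by simpa [eq_comm] using huw.2⟩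
  · rintro ⟨u, w, hi, hs⟩
    let v := u • (a i • (Pi.single i 1 : Fin m → ℤ) + a (fsucc i) • Pi.single (fsucc i) 1) +
      w • (b i • (Pi.single i 1 : Fin m → ℤ) + b (fsucc i) • Pi.single (fsucc i) 1)
    have hv : v ∈ Lmod m a b i := add_mem
      (Submodule.smul_mem _ _ (Submodule.subset_span (Or.inr (Set.mem_insert _ _))))
      (Submodule.smul_mem _ _ (Submodule.subset_span (Or.inr (Set.mem_insert_of_mem _ rfl))))
    have hxv : x - v ∈ Lmod m a b i :=
      mem_Lmod_of_eq_zero a b i (by simp [v, hi, hne.symm]) (by simp [v, hs, hne])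
    simpa using add_mem hxv hv

lemma det_smul_mem_Lmod (hm : 2 ≤ m) (i : Fin m) (x : Fin m → ℤ) :
    (a i * b (fsucc i) - a (fsucc i) * b i) • x ∈ Lmod m a b i := by
  rw [mem_Lmod_iff a b hm]
  exact ⟨x i * b (fsucc i) - x (fsucc i) * b i, a i * x (fsucc i) - a (fsucc i) * x i,
    by simp only [Pi.smul_apply, smul_eq_mul]; ring,
    by simp only [Pi.smul_apply, smul_eq_mul]; ring⟩

lemma phi_apply (t : Fin m → ℤ) (i : Fin m) :
    phi m a b t i = b i * ∑ j ∈ Iio i, a j * t j - a i * ∑ j ∈ Iio i, b j * t j := by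
  simp only [phi, LinearMap.coe_mk, AddHom.coe_mk, filter_gt_eq_Iio, mul_sum, ← sum_sub_distrib]
  exact sum_congr rfl fun j _ => by ring

lemma phi_mem_Lmod (hm : 2 ≤ m) {t : Fin m → ℤ} (ht : t ∈ Kmod m a b) (i : Fin m) :
    phi m a b t ∈ Lmod m a b i := by
  obtain ⟨hta, htb⟩ := ht
  have hA := sum_Iio_fsucc (f := fun j => a j * t j) (by simpa [mul_comm] using hta) i
  have hB := sum_Iio_fsucc (f := fun j => b j * t j) (by simpa [mul_comm] using htb) i
  rw [mem_Lmod_iff a b hm]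
  refine ⟨-∑ j ∈ Iio (fsucc i), b j * t j, ∑ j ∈ Iio (fsucc i), a j * t j, ?_, ?_⟩
  · rw [phi_apply, hA, hB]; ring
  · rw [phi_apply]; ring

lemma iInf_Lmod_le (hm : 2 ≤ m) (hprim : ∀ i, Int.gcd (a i) (b i) = 1) :
    ⨅ i, Lmod m a b i ≤ Submodule.span ℤ {a, b} ⊔ (Kmod m a b).map (phi m a b) := by
  intro x hx
  choose u w hu hw using fun i => (mem_Lmod_iff a b hm i).mp (Submodule.mem_iInf _ |>.mp hx i)
  let ρ := finRotate m
  have hρ (k : Fin m) : fsucc (ρ.symm k) = k := by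
    rw [fsucc_eq_finRotate, Equiv.apply_symm_apply]
  have hρ' (k : Fin m) : ρ.symm (fsucc k) = k := by
    rw [fsucc_eq_finRotate, Equiv.symm_apply_apply]
  choose t htu htw using fun k => Int.exists_eq_mul_of_gcd_eq_one (hprim k)
    (X := u (ρ.symm k) - u k) (Y := w (ρ.symm k) - w k)
    (by have := hw (ρ.symm k); rw [hρ] at this; linear_combination hu k - this)
  have htK : t ∈ Kmod m a b := by
    constructor
    · calc ∑ k, t k * a k = ∑ k, w k - ∑ k, w (ρ.symm k) := by
            rw [← sum_sub_distrib]; exact sum_congr rfl fun k _ => by linear_combination htw k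
        _ = 0 := by rw [Equiv.sum_comp, sub_self]
    · calc ∑ k, t k * b k = ∑ k, u (ρ.symm k) - ∑ k, u k := by
            rw [← sum_sub_distrib]; exact sum_congr rfl fun k _ => by linear_combination -htu k
        _ = 0 := by rw [Equiv.sum_comp, sub_self]
  have hA := sum_Iio_fsucc (f := fun j => a j * t j) (by simpa [mul_comm] using htK.1)
  have hB := sum_Iio_fsucc (f := fun j => b j * t j) (by simpa [mul_comm] using htK.2)
  -- `(u_k, w_k) + (B_{k+1}, -A_{k+1})`, with `A`, `B` the partial sums of `a t`, `b t`, does not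
  -- depend on `k`
  let U k := u k + ∑ j ∈ Iio (fsucc k), b j * t j
  let W k := w k - ∑ j ∈ Iio (fsucc k), a j * t j
  have hU (k : Fin m) : U (fsucc k) = U k := by
    have := htu (fsucc k); rw [hρ'] at this
    simp only [U, hB (fsucc k)]; linear_combination -this
  have hW (k : Fin m) : W (fsucc k) = W k := by
    have := htw (fsucc k); rw [hρ'] at this
    simp only [W, hA (fsucc k)]; linear_combination -this
  let k₀ : Fin m := ⟨0, by omega⟩
  have hxeq : x = U k₀ • a + W k₀ • b + phi m a b t := by
    funext k
    have hUk := eq_of_forall_fsucc_eq hU k k₀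
    have hWk := eq_of_forall_fsucc_eq hW k k₀
    simp only [U, W, hA k, hB k] at hUk hWk
    simp only [Pi.add_apply, Pi.smul_apply, smul_eq_mul, phi_apply, hu k]
    linear_combination (a k) * hUk + (b k) * hWk
  rw [hxeq]
  exact Submodule.add_mem_sup (Submodule.mem_span_pair.mpr ⟨_, _, rfl⟩)
    (Submodule.mem_map_of_mem htK)

lemma iInf_Lmod_eq (hm : 2 ≤ m) (hprim : ∀ i, Int.gcd (a i) (b i) = 1) :
    ⨅ i, Lmod m a b i = Submodule.span ℤ {a, b} ⊔ (Kmod m a b).map (phi m a b) := by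
  refine le_antisymm (iInf_Lmod_le a b hm hprim) (sup_le ?_ ?_)
  · have ha : a ∈ ⨅ i, Lmod m a b i := Submodule.mem_iInf _ |>.mpr fun i =>
      (mem_Lmod_iff a b hm i).mpr ⟨1, 0, by ring, by ring⟩
    have hb : b ∈ ⨅ i, Lmod m a b i := Submodule.mem_iInf _ |>.mpr fun i =>
      (mem_Lmod_iff a b hm i).mpr ⟨0, 1, by ring, by ring⟩
    exact Submodule.span_le.mpr (Set.pair_subset ha hb)
  · exact Submodule.map_le_iff_le_comap.mpr fun t ht =>
      Submodule.mem_iInf _ |>.mpr fun i => phi_mem_Lmod a b hm ht i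

lemma index_iInf_Lmod_ne_zero (hm : 2 ≤ m)
    (hdet : ∀ i : Fin m, a i * b (fsucc i) - a (fsucc i) * b i ≠ 0) :
    (⨅ i, Lmod m a b i).toAddSubgroup.index ≠ 0 := by
  refine Int.submodule_toAddSubgroup_index_ne_zero_of_smul_mem
    (D := ∏ i, (a i * b (fsucc i) - a (fsucc i) * b i)) (prod_ne_zero_iff.mpr fun i _ => hdet i)
    fun x => Submodule.mem_iInf _ |>.mpr fun i => ?_
  rw [← mul_prod_erase _ _ (mem_univ i), mul_comm, mul_smul]
  exact Submodule.smul_mem _ _ (det_smul_mem_Lmod a b hm i x)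

lemma span_range_col_eq (hm : 3 ≤ m) (κ : Module.Basis (Fin (m - 2)) ℤ (Kmod m a b))
    (M : Matrix (Fin m) (Fin m) ℤ) (h0 : ∀ k : Fin m, M k ⟨0, Nat.zero_lt_of_lt hm⟩ = a k)
    (h1 : ∀ k : Fin m, M k ⟨1, Nat.lt_of_succ_lt hm⟩ = b k)
    (h2 : ∀ (j : Fin (m - 2)) (k : Fin m),
      M k ⟨(j : ℕ) + 2, Nat.add_lt_of_lt_sub j.isLt⟩ = phi m a b (κ j : Fin m → ℤ) k) :
    Submodule.span ℤ (Set.range M.col) =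
      Submodule.span ℤ {a, b} ⊔ (Kmod m a b).map (phi m a b) := by
  have hc0 : M.col ⟨0, Nat.zero_lt_of_lt hm⟩ = a := funext h0
  have hc1 : M.col ⟨1, Nat.lt_of_succ_lt hm⟩ = b := funext h1
  have hc2 (j : Fin (m - 2)) : M.col ⟨(j : ℕ) + 2, Nat.add_lt_of_lt_sub j.isLt⟩ =
      phi m a b (κ j) := funext (h2 j)
  have hK : (Kmod m a b).map (phi m a b) =
      Submodule.span ℤ (Set.range fun j => phi m a b (κ j)) := by
    calc (Kmod m a b).map (phi m a b)
        _ = ((Submodule.span ℤ (Set.range κ)).map (Kmod m a b).subtype).map (phi m a b) := by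
          rw [κ.span_eq, Submodule.map_subtype_top]
        _ = _ := by
          rw [Submodule.map_span, Submodule.map_span, ← Set.range_comp, ← Set.range_comp]
          rfl
  refine le_antisymm (Submodule.span_le.mpr ?_) (sup_le ?_ ?_)
  · rintro _ ⟨j, rfl⟩
    obtain hj | hj | hj : (j : ℕ) = 0 ∨ (j : ℕ) = 1 ∨ 2 ≤ (j : ℕ) := by omega
    · rw [show j = ⟨0, by omega⟩ from Fin.ext hj, hc0]
      exact Submodule.mem_sup_left (Submodule.subset_span (by simp))
    · rw [show j = ⟨1, by omega⟩ from Fin.ext hj, hc1]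
      exact Submodule.mem_sup_left (Submodule.subset_span (by simp))
    · let j' : Fin (m - 2) := ⟨(j : ℕ) - 2, by omega⟩
      rw [show j = ⟨(j' : ℕ) + 2, by omega⟩ from Fin.ext (by simp [j']; omega), hc2, hK]
      exact Submodule.mem_sup_right (Submodule.subset_span ⟨j', rfl⟩)
  · exact Submodule.span_le.mpr (Set.pair_subset (Submodule.subset_span ⟨_, hc0⟩)
      (Submodule.subset_span ⟨_, hc1⟩))
  · rw [hK]
    exact Submodule.span_mono (Set.range_subset_iff.mpr fun j => ⟨_, hc2 j⟩)

end

/-- `L = L_1 ∩ ⋯ ∩ L_m` has finite index in `ℤ^m`, and for every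
`ℤ`-basis `κ_1, …, κ_{m-2}` of `K`, the index `[ℤ^m : L]` equals `|det M|` where `M`
is the `m × m` matrix with columns `a, b, φ(κ_1), …, φ(κ_{m-2})`; in particular
`det M ≠ 0`. -/
theorem stmt13 (m : ℕ) (hm : 3 ≤ m) (a b : Fin m → ℤ)
    (hprim : ∀ i, Int.gcd (a i) (b i) = 1)
    (hdet : ∀ i : Fin m, a i * b (fsucc i) - a (fsucc i) * b i ≠ 0) :
    (⨅ i, Lmod m a b i).toAddSubgroup.index ≠ 0 ∧
    ∀ (κ : Module.Basis (Fin (m - 2)) ℤ ↥(Kmod m a b)) (M : Matrix (Fin m) (Fin m) ℤ),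
      (∀ k : Fin m, M k ⟨0, by omega⟩ = a k) →
      (∀ k : Fin m, M k ⟨1, by omega⟩ = b k) →
      (∀ (j : Fin (m - 2)) (k : Fin m),
        M k ⟨(j : ℕ) + 2, by have := j.isLt; omega⟩ = phi m a b (κ j : Fin m → ℤ) k) →
      M.det ≠ 0 ∧ (⨅ i, Lmod m a b i).toAddSubgroup.index = M.det.natAbs := by
  have hidx := index_iInf_Lmod_ne_zero a b (by omega) hdet
  refine ⟨hidx, fun κ M h0 h1 h2 => ?_⟩
  have hL : ⨅ i, Lmod m a b i = LinearMap.range M.mulVecLin := by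
    rw [Matrix.range_mulVecLin, span_range_col_eq a b hm κ M h0 h1 h2,
      iInf_Lmod_eq a b (by omega) hprim]
  rw [hL, Matrix.index_range_mulVecLin] at hidx ⊢
  exact ⟨Int.natAbs_ne_zero.mp hidx, rfl⟩

end ToricStmt
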